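/- Key preservation propagates to the fixpoint: let φ : Multiset τ → Multiset τ be an additive monoid homomorphism, p : τ → α a function, and suppose condition (C) holds: for every r and every s ∈ φ({r}), p(s) = p(r). Let R be a multiset and define S_0 = dedup(R), S_{n+1} = dedup(R + φ(S_n)). Then for every n and every s ∈ S_n, there exists r ∈ R with p(s) = p(r). -/
import Mathlib


/-- The fixpoint sequence with duplicate elimination:
`S 0 = dedup R`, `S (n+1) = dedup (R + φ (S n))`. -/
def fixSeqD {τ : Type*} [DecidableEq τ] (φ : Multiset τ → Multiset τ)
    (R : Multiset τ) : ℕ → Multiset τ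
  | 0 => R.dedup
  | n + 1 => (R + φ (fixSeqD φ R n)).dedup

theorem phi_mem_key {τ : Type*} {α : Type*}
    (φ : Multiset τ → Multiset τ) (p : τ → α)
    (hφ0 : φ 0 = 0) (hφadd : ∀ a b : Multiset τ, φ (a + b) = φ a + φ b)
    (hC : ∀ r : τ, ∀ s ∈ φ {r}, p s = p r)
    (M : Multiset τ) : ∀ s ∈ φ M, ∃ m ∈ M, p s = p m := by
  induction M using Multiset.induction with
  | empty => simp [hφ0]
  | cons a M ih =>
    intro s hs
    have : φ (a ::ₘ M) = φ {a} + φ M := by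
      rw [← hφadd, Multiset.singleton_add]
    rw [this, Multiset.mem_add] at hs
    rcases hs with h | h
    · exact ⟨a, Multiset.mem_cons_self a M, hC a s h⟩
    · obtain ⟨m, hm, hpm⟩ := ih s h
      exact ⟨m, Multiset.mem_cons_of_mem hm, hpm⟩

/-- Key preservation propagates to the fixpoint: if `φ` preserves the key `p`
of singletons, then every element of the fixpoint sequence has the same key as
some element of `R`. -/
theorem fixpoint_key_preservation {τ : Type*} {α : Type*} [DecidableEq τ]
    (φ : Multiset τ → Multiset τ) (p : τ → α)
    (hφ0 : φ 0 = 0) (hφadd : ∀ a b : Multiset τ, φ (a + b) = φ a + φ b)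
    (hC : ∀ r : τ, ∀ s ∈ φ {r}, p s = p r)
    (R : Multiset τ) :
    ∀ n, ∀ s ∈ fixSeqD φ R n, ∃ r ∈ R, p s = p r := by
  intro n
  induction n with
  | zero =>
    intro s hs
    rw [fixSeqD, Multiset.mem_dedup] at hs
    exact ⟨s, hs, rfl⟩
  | succ n ih =>
    intro s hs
    rw [fixSeqD, Multiset.mem_dedup, Multiset.mem_add] at hs
    rcases hs with h | h
    · exact ⟨s, h, rfl⟩
    · obtain ⟨m, hm, hpm⟩ := phi_mem_key φ p hφ0 hφadd hC _ s h
      obtain ⟨r, hr, hpr⟩ := ih m hm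
      exact ⟨r, hr, hpm.trans hpr⟩
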